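/- arXiv:1405.3314 — 3 statements merged into one kernel-verified Lean document; each statement's English description precedes it below -/
import Mathlib

section
/- Let E be a finite-dimensional K-vector space with a nondegenerate alternating bilinear form ⟨,⟩, and let F ⊆ E be an isotropic subspace. Then the map sending a linear map φ : F → E/F to the alternating form ⟨u,v⟩^φ = ⟨φ̃(u),v⟩ + ⟨u,φ̃(v)⟩ on F (for any lift φ̃ of φ) is a surjective linear map from Hom(F, E/F) onto the space of alternating bilinear forms on F. -/
/-- for a nondegenerate alternating bilinear form `⟨,⟩` on a
finite-dimensional space `E` and an isotropic subspace `F`, the map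
`Hom(F, E/F) → {alternating forms on F}`, `φ ↦ ⟨,⟩^φ` with
`⟨u,v⟩^φ = ⟨φ̃(u),v⟩ + ⟨u,φ̃(v)⟩` for any lift `φ̃` of `φ`, is surjective. -/
theorem stmt4 (K E : Type*) [Field K] [AddCommGroup E] [Module K E]
    [FiniteDimensional K E]
    (b : LinearMap.BilinForm K E)
    (halt : ∀ x : E, b x x = 0)
    (hnd : ∀ x : E, (∀ y : E, b x y = 0) → x = 0)
    (F : Submodule K E) (hiso : ∀ x ∈ F, ∀ y ∈ F, b x y = 0)
    (c : LinearMap.BilinForm K F) (hc : ∀ u : F, c u u = 0) :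
    ∃ φ : F →ₗ[K] E ⧸ F, ∀ l : F →ₗ[K] E, F.mkQ.comp l = φ →
      ∀ u v : F, b (l u) ↑v + b ↑u (l v) = c u v := by
  classical
  -- skew-symmetry of b and c
  have hbskew : ∀ x y : E, b y x = -b x y := by
    intro x y
    have h := halt (x + y)
    simp only [map_add, LinearMap.add_apply, halt x, halt y, zero_add, add_zero] at h
    linear_combination h
  have hcskew : ∀ u v : F, c v u = -c u v := by
    intro u v
    have h := hc (u + v)
    simp only [map_add, LinearMap.add_apply, hc u, hc v, zero_add, add_zero] at h
    linear_combination h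
  -- a bilinear form d on F with d u v - d v u = c u v
  let bF := Module.finBasis K F
  let d : F →ₗ[K] F →ₗ[K] K :=
    bF.constr K fun i => bF.constr K fun j => if i < j then c (bF i) (bF j) else 0
  have hd : ∀ i j, d (bF i) (bF j) = if i < j then c (bF i) (bF j) else 0 := by
    intro i j
    simp only [d]
    rw [Module.Basis.constr_basis, Module.Basis.constr_basis]
  have hdc : ∀ u v : F, d u v - d v u = c u v := by
    have heq : d - d.flip = c := by
      apply bF.ext; intro i; apply bF.ext; intro j
      simp only [LinearMap.sub_apply, LinearMap.flip_apply, hd]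
      rcases lt_trichotomy i j with h | h | h
      · simp [h, h.asymm]
      · simp [h, hc]
      · rw [if_neg h.asymm, if_pos h, hcskew]
        ring
    intro u v
    have := LinearMap.congr_fun (LinearMap.congr_fun heq u) v
    simpa using this
  -- b, as a map E →ₗ Dual E, is injective hence surjective
  have hβinj : Function.Injective (b : E →ₗ[K] Module.Dual K E) := by
    intro x y h
    have hz : ∀ z, b (x - y) z = 0 := by
      intro z
      simp [map_sub, LinearMap.congr_fun h z]
    exact sub_eq_zero.mp (hnd _ hz)
  have hβsurj : Function.Surjective (b : E →ₗ[K] Module.Dual K E) :=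
    (LinearMap.injective_iff_surjective_of_finrank_eq_finrank
      (Subspace.dual_finrank_eq).symm).mp hβinj
  -- the composite E →ₗ Dual F is surjective
  let r : Module.Dual K E →ₗ[K] Module.Dual K F := F.dualRestrict
  have hrsurj : Function.Surjective r := Subspace.dualRestrict_surjective
  let ρ : E →ₗ[K] Module.Dual K F := r.comp (b : E →ₗ[K] Module.Dual K E)
  have hρsurj : Function.Surjective ρ := hrsurj.comp hβsurj
  obtain ⟨s, hs⟩ := ρ.exists_rightInverse_of_surjective (LinearMap.range_eq_top.mpr hρsurj)
  -- the lift l₀ and its key property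
  let l₀ : F →ₗ[K] E := s.comp d
  have hkey : ∀ u v : F, b (l₀ u) ↑v = d u v := by
    intro u v
    have := LinearMap.congr_fun hs (d u)
    have h2 := LinearMap.congr_fun this v
    simpa [ρ, r, l₀, Submodule.dualRestrict_apply] using h2
  refine ⟨F.mkQ.comp l₀, fun l hl u v => ?_⟩
  -- l - l₀ maps into F
  have hmem : ∀ w : F, l w - l₀ w ∈ F := by
    intro w
    have h1 := LinearMap.congr_fun hl w
    simp only [LinearMap.comp_apply, Submodule.mkQ_apply] at h1
    rw [← Submodule.Quotient.mk_eq_zero F]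
    have : Submodule.Quotient.mk (p := F) (l w - l₀ w)
        = Submodule.Quotient.mk (l w) - Submodule.Quotient.mk (l₀ w) := by
      simp [Submodule.Quotient.mk_sub]
    rw [this, h1]
    simp
  have h1 : b (l u) ↑v = d u v := by
    have : b (l u) ↑v = b (l₀ u) ↑v + b (l u - l₀ u) ↑v := by
      rw [map_sub]; ring_nf; simp [map_sub]
    rw [this, hkey, hiso _ (hmem u) _ v.2, add_zero]
  have h2 : b ↑u (l v) = -d v u := by
    rw [hbskew (l v) ↑u]
    congr 1
    have : b (l v) ↑u = b (l₀ v) ↑u + b (l v - l₀ v) ↑u := by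
      rw [map_sub]; ring_nf; simp [map_sub]
    rw [this, hkey, hiso _ (hmem v) _ u.2, add_zero]
  rw [h1, h2, ← hdc u v]
  ring
end

section
/- Define the sequence (aⁱ)_{i=1,…,g+1} of k-tuples (k = 2k') by a¹ = (0,0,1,1,…,k'-1,k'-1) and a^{i+1}_j = aⁱ_j + 1 - εⁱ_j, where εⁱ_j ∈ {0,1} is 1 exactly in the cases: (a) i = m²+2c+1 with 0 ≤ m < k', 0 ≤ c < m, and j ∈ {2c+1, 2m+1}; (b) i = m²+2c+2 with 0 ≤ m < k', 0 ≤ c < m, and j ∈ {2c+2, 2m+2}; (c) i = m²+2m+1 with 0 ≤ m < k' and j ∈ {2m+1, 2m+2}; (d) i = (k')²+2k'm+c with 0 ≤ m < g-1-d', 1 ≤ c ≤ 2k', and j = c. Then for all i = 1,…,g+1 and j = 1,…,k'-1: aⁱ_{2j-1} ≤ aⁱ_{2j} < aⁱ_{2j+1} ≤ aⁱ_{2j+2}. -/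
open Classical in
/-- `ε^i_j` of the even-even construction of Proposition 7.6. -/
noncomputable def eps (k' g d' : ℕ) (i j : ℕ) : ℕ :=
  if (∃ m c, m < k' ∧ c < m ∧ i = m ^ 2 + 2 * c + 1 ∧ (j = 2 * c + 1 ∨ j = 2 * m + 1)) ∨
     (∃ m c, m < k' ∧ c < m ∧ i = m ^ 2 + 2 * c + 2 ∧ (j = 2 * c + 2 ∨ j = 2 * m + 2)) ∨
     (∃ m, m < k' ∧ i = m ^ 2 + 2 * m + 1 ∧ (j = 2 * m + 1 ∨ j = 2 * m + 2)) ∨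
     (∃ m c, m < g - 1 - d' ∧ 1 ≤ c ∧ c ≤ 2 * k' ∧ i = k' ^ 2 + 2 * k' * m + c ∧ j = c)
  then 1 else 0

/-- The sequences `a^i` (1-indexed in both `i` and `j`, `1 ≤ j ≤ 2k'`), with
`a¹ = (0,0,1,1,…,k'-1,k'-1)` and `a^{i+1}_j = a^i_j + 1 - ε^i_j`. -/
noncomputable def aseq (k' g d' : ℕ) : ℕ → ℕ → ℕ
  | 0, _ => 0
  | 1, j => (j - 1) / 2
  | i + 2, j => aseq k' g d' (i + 1) j + 1 - eps k' g d' (i + 1) j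

/-- The condition defining `eps`. -/
def Cnd (k' g d' i j : ℕ) : Prop :=
  (∃ m c, m < k' ∧ c < m ∧ i = m ^ 2 + 2 * c + 1 ∧ (j = 2 * c + 1 ∨ j = 2 * m + 1)) ∨
  (∃ m c, m < k' ∧ c < m ∧ i = m ^ 2 + 2 * c + 2 ∧ (j = 2 * c + 2 ∨ j = 2 * m + 2)) ∨
  (∃ m, m < k' ∧ i = m ^ 2 + 2 * m + 1 ∧ (j = 2 * m + 1 ∨ j = 2 * m + 2)) ∨
  (∃ m c, m < g - 1 - d' ∧ 1 ≤ c ∧ c ≤ 2 * k' ∧ i = k' ^ 2 + 2 * k' * m + c ∧ j = c)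

lemma eps_pos {k' g d' i j : ℕ} (h : Cnd k' g d' i j) : eps k' g d' i j = 1 := if_pos h

lemma eps_neg {k' g d' i j : ℕ} (h : ¬ Cnd k' g d' i j) : eps k' g d' i j = 0 := if_neg h

lemma eps_le_one (k' g d' i j : ℕ) : eps k' g d' i j ≤ 1 := by
  by_cases h : Cnd k' g d' i j
  · rw [eps_pos h]
  · rw [eps_neg h]; omega

open Classical in
/-- number of `1 ≤ t ≤ i` with `ε^t_j = 1`. -/
noncomputable def Scount (k' g d' i j : ℕ) : ℕ :=
  ((Finset.range i).filter (fun t => Cnd k' g d' (t + 1) j)).card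

lemma Scount_succ (k' g d' i j : ℕ) :
    Scount k' g d' (i + 1) j = Scount k' g d' i j + eps k' g d' (i + 1) j := by
  classical
  unfold Scount
  rw [Finset.range_add_one, Finset.filter_insert]
  by_cases h : Cnd k' g d' (i + 1) j
  · rw [if_pos h, eps_pos h, Finset.card_insert_of_notMem (by simp)]
  · rw [if_neg h, eps_neg h, Nat.add_zero]

lemma aseq_add_Scount (k' g d' : ℕ) : ∀ i j, aseq k' g d' (i + 1) j + Scount k' g d' i j
    = (j - 1) / 2 + i := by
  intro i
  induction i with
  | zero => intro j; simp [aseq, Scount]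
  | succ n ih =>
    intro j
    have h1 := ih j
    have h2 : aseq k' g d' (n + 1 + 1) j = aseq k' g d' (n + 1) j + 1 - eps k' g d' (n + 1) j := rfl
    have h3 := Scount_succ k' g d' n j
    have h4 := eps_le_one k' g d' (n + 1) j
    omega

lemma sqle {a b : ℕ} (h : a < b) : a ^ 2 + 2 * a + 1 ≤ b ^ 2 := by
  calc a ^ 2 + 2 * a + 1 = (a + 1) ^ 2 := by ring
    _ ≤ b ^ 2 := Nat.pow_le_pow_left h 2

/-- key lemma for the comparison of `S` at `2c+1` and `2c+2`. -/
lemma key1 {k' g d' c : ℕ} (hc : c < k') (t : ℕ) (ht : Cnd k' g d' (t + 1) (2 * c + 2)) :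
    (t + 1 = c ^ 2 + 2 * c + 1 ∧ Cnd k' g d' (t + 1) (2 * c + 1)) ∨
    (t + 1 ≠ c ^ 2 + 2 * c + 1 ∧ 1 ≤ t ∧ t ≠ c ^ 2 + 2 * c + 1 ∧
      Cnd k' g d' t (2 * c + 1)) := by
  rcases ht with ⟨m, c₁, hm, hc₁, heq, hj⟩ | ⟨m, c₁, hm, hc₁, heq, hj⟩ |
    ⟨m, hm, heq, hj⟩ | ⟨m, c₂, hm, hc₂1, hc₂2, heq, hj⟩
  · omega
  · rcases hj with hj | hj
    · -- c₁ = c, c < m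
      have hcc : c₁ = c := by omega
      subst hcc
      have hsq := sqle hc₁
      right
      refine ⟨by omega, by omega, by omega, Or.inl ⟨m, c₁, hm, hc₁, by omega, Or.inl rfl⟩⟩
    · -- m = c, c₁ < c
      have hmc : m = c := by omega
      subst hmc
      right
      refine ⟨by omega, by omega, by omega, Or.inl ⟨m, c₁, hm, hc₁, by omega, Or.inr rfl⟩⟩
  · have hmc : m = c := by omega
    subst hmc
    left
    exact ⟨by omega, Or.inr (Or.inr (Or.inl ⟨m, hm, heq, Or.inl rfl⟩))⟩
  · have hcc : c₂ = 2 * c + 2 := by omega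
    subst hcc
    have hsq := sqle hc
    right
    refine ⟨by omega, by omega, by omega,
      Or.inr (Or.inr (Or.inr ⟨m, 2 * c + 1, hm, by omega, by omega, by omega, rfl⟩))⟩

/-- key lemma for the comparison of `S` at `2j` and `2j+1`. -/
lemma key2 {k' g d' j : ℕ} (hj1 : 1 ≤ j) (hjk : j < k') (t : ℕ)
    (ht : Cnd k' g d' (t + 1) (2 * j + 1)) :
    ((j ^ 2 + 1 < t + 1 ∧ t + 1 < j ^ 2 + 2 * j) ∧ 2 * j ≤ t ∧
      Cnd k' g d' (t - 2 * j + 1) (2 * j)) ∨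
    (¬(j ^ 2 + 1 < t + 1 ∧ t + 1 < j ^ 2 + 2 * j) ∧ j ^ 2 + 1 ≤ t + 1 ∧
      Cnd k' g d' t (2 * j)) := by
  obtain ⟨d, rfl⟩ : ∃ d, j = d + 1 := ⟨j - 1, by omega⟩
  have hde : (d + 1) ^ 2 = d ^ 2 + 2 * d + 1 := by ring
  rcases ht with ⟨m, c₁, hm, hc₁, heq, hjj⟩ | ⟨m, c₁, hm, hc₁, heq, hjj⟩ |
    ⟨m, hm, heq, hjj⟩ | ⟨m, c₂, hm, hc₂1, hc₂2, heq, hjj⟩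
  · rcases hjj with hjj | hjj
    · -- c₁ = j, j < m
      have hcc : c₁ = d + 1 := by omega
      subst hcc
      have hsq := sqle hc₁
      right
      refine ⟨by omega, by omega,
        Or.inr (Or.inl ⟨m, d, hm, by omega, by omega, Or.inl (by omega)⟩)⟩
    · -- m = j, c₁ < j
      have hmc : m = d + 1 := by omega
      subst hmc
      rcases Nat.eq_zero_or_pos c₁ with hc0 | hc0
      · subst hc0
        right
        refine ⟨by omega, by omega,
          Or.inr (Or.inr (Or.inl ⟨d, by omega, by omega, Or.inr (by omega)⟩))⟩
      · left
        refine ⟨by omega, by omega,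
          Or.inr (Or.inl ⟨d, c₁ - 1, by omega, by omega, by omega, Or.inr (by omega)⟩)⟩
  · omega
  · have hmc : m = d + 1 := by omega
    subst hmc
    have heq2 : (d + 1) ^ 2 + 2 * (d + 1) + 1 = d ^ 2 + 4 * d + 4 := by ring
    right
    refine ⟨by omega, by omega,
      Or.inr (Or.inl ⟨d + 1, d, hm, by omega, by omega, Or.inl (by omega)⟩)⟩
  · have hcc : c₂ = 2 * (d + 1) + 1 := by omega
    subst hcc
    have hsq := sqle hjk
    right
    refine ⟨by omega, by omega,
      Or.inr (Or.inr (Or.inr ⟨m, 2 * (d + 1), hm, by omega, by omega, by omega, rfl⟩))⟩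

lemma L1 {k' g d' c : ℕ} (hc : c < k') (i : ℕ) :
    Scount k' g d' i (2 * c + 2) ≤ Scount k' g d' i (2 * c + 1) := by
  classical
  unfold Scount
  apply Finset.card_le_card_of_injOn (fun t => if t + 1 = c ^ 2 + 2 * c + 1 then t else t - 1)
  · intro t htm
    simp only [Finset.coe_filter, Set.mem_setOf_eq, Finset.mem_range] at htm ⊢
    obtain ⟨hti, htc⟩ := htm
    rcases key1 hc t htc with ⟨he, hcnd⟩ | ⟨hne, ht1, htne, hcnd⟩
    · rw [if_pos he]; exact ⟨hti, hcnd⟩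
    · rw [if_neg hne]
      constructor
      · omega
      · have : t - 1 + 1 = t := by omega
        rw [this]; exact hcnd
  · intro t1 h1 t2 h2 hf
    simp only [Finset.coe_filter, Set.mem_setOf_eq, Finset.mem_range] at h1 h2
    rcases key1 hc t1 h1.2 with ⟨he1, _⟩ | ⟨hne1, ht11, htne1, _⟩ <;>
      rcases key1 hc t2 h2.2 with ⟨he2, _⟩ | ⟨hne2, ht12, htne2, _⟩ <;>
      simp only at hf <;> split_ifs at hf <;> omega

lemma L2 {k' g d' j : ℕ} (hj1 : 1 ≤ j) (hjk : j < k') (i : ℕ) :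
    Scount k' g d' i (2 * j + 1) ≤ Scount k' g d' i (2 * j) := by
  classical
  unfold Scount
  apply Finset.card_le_card_of_injOn
    (fun t => if j ^ 2 + 1 < t + 1 ∧ t + 1 < j ^ 2 + 2 * j then t - 2 * j else t - 1)
  · intro t htm
    simp only [Finset.coe_filter, Set.mem_setOf_eq, Finset.mem_range] at htm ⊢
    obtain ⟨hti, htc⟩ := htm
    rcases key2 hj1 hjk t htc with ⟨hb, ht2j, hcnd⟩ | ⟨hnb, hge, hcnd⟩
    · rw [if_pos hb]; exact ⟨by omega, hcnd⟩
    · rw [if_neg hnb]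
      have hjsq : j ≤ j ^ 2 := by
        calc j = j * 1 := by ring
          _ ≤ j * j := by exact Nat.mul_le_mul_left j hj1
          _ = j ^ 2 := by ring
      constructor
      · omega
      · have : t - 1 + 1 = t := by omega
        rw [this]; exact hcnd
  · intro t1 h1 t2 h2 hf
    simp only [Finset.coe_filter, Set.mem_setOf_eq, Finset.mem_range] at h1 h2
    have hjsq : j ≤ j ^ 2 := by
      calc j = j * 1 := by ring
        _ ≤ j * j := by exact Nat.mul_le_mul_left j hj1
        _ = j ^ 2 := by ring
    rcases key2 hj1 hjk t1 h1.2 with ⟨hb1, ht21, _⟩ | ⟨hnb1, hge1, _⟩ <;>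
      rcases key2 hj1 hjk t2 h2.2 with ⟨hb2, ht22, _⟩ | ⟨hnb2, hge2, _⟩ <;>
      simp only at hf <;> split_ifs at hf <;> omega

/-- for the sequences `a^i` of the even-even construction, for all
`1 ≤ i ≤ g+1` and `1 ≤ j ≤ k'-1` we have
`a^i_{2j-1} ≤ a^i_{2j} < a^i_{2j+1} ≤ a^i_{2j+2}`. -/
theorem stmt10 (k' g d' : ℕ) (hk' : 0 < k') (hg : 0 < g) (hd' : 0 < d')
    (hineq : g ≥ k' ^ 2 + 2 * k' * (g - 1 - d')) (hgd : d' + 1 ≤ g) :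
    ∀ i j, 1 ≤ i → i ≤ g + 1 → 1 ≤ j → j ≤ k' - 1 →
      aseq k' g d' i (2 * j - 1) ≤ aseq k' g d' i (2 * j) ∧
      aseq k' g d' i (2 * j) < aseq k' g d' i (2 * j + 1) ∧
      aseq k' g d' i (2 * j + 1) ≤ aseq k' g d' i (2 * j + 2) := by
  intro i j hi1 hig hj1 hjk
  obtain ⟨n, rfl⟩ : ∃ n, i = n + 1 := ⟨i - 1, by omega⟩
  have hjk' : j < k' := by omega
  have e1 := aseq_add_Scount k' g d' n (2 * j - 1)
  have e2 := aseq_add_Scount k' g d' n (2 * j)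
  have e3 := aseq_add_Scount k' g d' n (2 * j + 1)
  have e4 := aseq_add_Scount k' g d' n (2 * j + 2)
  have h21 : 2 * j - 1 = 2 * (j - 1) + 1 := by omega
  have h22 : 2 * j = 2 * (j - 1) + 2 := by omega
  have i1 : Scount k' g d' n (2 * j) ≤ Scount k' g d' n (2 * j - 1) := by
    rw [h21, h22]; exact L1 (by omega) n
  have i2 : Scount k' g d' n (2 * j + 1) ≤ Scount k' g d' n (2 * j) := L2 hj1 hjk' n
  have i3 : Scount k' g d' n (2 * j + 2) ≤ Scount k' g d' n (2 * j + 1) := L1 hjk' n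
  have d1 : (2 * j - 1 - 1) / 2 = j - 1 := by omega
  have d2 : (2 * j - 1) / 2 = j - 1 := by omega
  have d3 : (2 * j + 1 - 1) / 2 = j := by omega
  have d4 : (2 * j + 2 - 1) / 2 = j := by omega
  omega
end

section
/- With the sequences aⁱ of the preceding construction (k = 2k', ε as defined), for i = 1,…,(k')², if j₁ < j₂ are the two indices with εⁱ_{j₁} = εⁱ_{j₂} = 1, then aⁱ_{j₁} + aⁱ_{j₂} = 2(i-1). -/
/-- The cumulative sum of `eps` over `i' = 1, …, i-1`. -/
noncomputable def Ssum (k' g d' i j : ℕ) : ℕ := ∑ i' ∈ Finset.Ico 1 i, eps k' g d' i' j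

lemma Ssum_one (k' g d' j : ℕ) : Ssum k' g d' 1 j = 0 := by simp [Ssum]

lemma Ssum_succ (k' g d' i j : ℕ) (h : 1 ≤ i) :
    Ssum k' g d' (i + 1) j = Ssum k' g d' i j + eps k' g d' i j :=
  Finset.sum_Ico_succ_top h _

/-- closed form for `aseq`, together with the bound making ℕ-subtraction harmless. -/
lemma aseq_eq (k' g d' : ℕ) : ∀ n j,
    aseq k' g d' (n + 1) j = (j - 1) / 2 + n - Ssum k' g d' (n + 1) j ∧
    Ssum k' g d' (n + 1) j ≤ n := by
  intro n
  induction n with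
  | zero => intro j; simp [aseq, Ssum_one]
  | succ n ih =>
    intro j
    obtain ⟨h1, h2⟩ := ih j
    have he := eps_le_one k' g d' (n + 1) j
    have hs := Ssum_succ k' g d' (n + 1) j (by omega)
    constructor
    · show aseq k' g d' (n + 2) j = _
      rw [aseq, h1, hs]; omega
    · omega

/-- if `m² + r = m''² + s` with both `r, s` in the "block range", the decompositions agree. -/
lemma block_eq {m r m'' s : ℕ} (h : m ^ 2 + r = m'' ^ 2 + s) (hr1 : 1 ≤ r) (hr2 : r ≤ 2 * m + 1)
    (hs1 : 1 ≤ s) (hs2 : s ≤ 2 * m'' + 1) : m = m'' ∧ r = s := by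
  have key : ∀ a b : ℕ, a < b → (a + 1) ^ 2 ≤ b ^ 2 := by
    intro a b hab
    exact Nat.pow_le_pow_left hab 2
  have e1 : (m + 1) ^ 2 = m ^ 2 + 2 * m + 1 := by ring
  have e2 : (m'' + 1) ^ 2 = m'' ^ 2 + 2 * m'' + 1 := by ring
  rcases Nat.lt_trichotomy m m'' with hlt | heq | hgt
  · have := key m m'' hlt; omega
  · constructor
    · exact heq
    · subst heq; omega
  · have := key m'' m hgt; omega

/-- characterization of `eps` on block `m` (for `i ≤ k'²`). -/
lemma eps_char (k' g d' m r j : ℕ) (hm : m < k') (hr1 : 1 ≤ r) (hr2 : r ≤ 2 * m + 1) :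
    eps k' g d' (m ^ 2 + r) j =
      if (r = 2 * m + 1 ∧ (j = 2 * m + 1 ∨ j = 2 * m + 2)) ∨
         (r < 2 * m + 1 ∧ r % 2 = 1 ∧ (j = r ∨ j = 2 * m + 1)) ∨
         (r < 2 * m + 1 ∧ r % 2 = 0 ∧ (j = r ∨ j = 2 * m + 2)) then 1 else 0 := by
  have hik : m ^ 2 + r ≤ k' ^ 2 := by
    have h1 : (m + 1) ^ 2 ≤ k' ^ 2 := Nat.pow_le_pow_left hm 2
    have e1 : (m + 1) ^ 2 = m ^ 2 + 2 * m + 1 := by ring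
    omega
  have hiff : ((∃ m' c, m' < k' ∧ c < m' ∧ m ^ 2 + r = m' ^ 2 + 2 * c + 1 ∧
        (j = 2 * c + 1 ∨ j = 2 * m' + 1)) ∨
      (∃ m' c, m' < k' ∧ c < m' ∧ m ^ 2 + r = m' ^ 2 + 2 * c + 2 ∧
        (j = 2 * c + 2 ∨ j = 2 * m' + 2)) ∨
      (∃ m', m' < k' ∧ m ^ 2 + r = m' ^ 2 + 2 * m' + 1 ∧ (j = 2 * m' + 1 ∨ j = 2 * m' + 2)) ∨
      (∃ m' c, m' < g - 1 - d' ∧ 1 ≤ c ∧ c ≤ 2 * k' ∧ m ^ 2 + r = k' ^ 2 + 2 * k' * m' + c ∧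
        j = c)) ↔
      ((r = 2 * m + 1 ∧ (j = 2 * m + 1 ∨ j = 2 * m + 2)) ∨
       (r < 2 * m + 1 ∧ r % 2 = 1 ∧ (j = r ∨ j = 2 * m + 1)) ∨
       (r < 2 * m + 1 ∧ r % 2 = 0 ∧ (j = r ∨ j = 2 * m + 2))) := by
    constructor
    · rintro (⟨m', c, hm', hc, hi, hj⟩ | ⟨m', c, hm', hc, hi, hj⟩ | ⟨m', hm', hi, hj⟩ |
        ⟨m', c, hm', hc1, hc2, hi, hj⟩)
      · obtain ⟨e1, e2⟩ := block_eq (m := m) (r := r) (m'' := m') (s := 2 * c + 1)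
          (by omega) hr1 hr2 (by omega) (by omega)
        subst e1; omega
      · obtain ⟨e1, e2⟩ := block_eq (m := m) (r := r) (m'' := m') (s := 2 * c + 2)
          (by omega) hr1 hr2 (by omega) (by omega)
        subst e1; omega
      · obtain ⟨e1, e2⟩ := block_eq (m := m) (r := r) (m'' := m') (s := 2 * m' + 1)
          (by omega) hr1 hr2 (by omega) (by omega)
        subst e1; omega
      · have : k' ^ 2 ≤ k' ^ 2 + 2 * k' * m' := by omega
        omega
    · rintro (⟨h1, h2⟩ | ⟨h1, h2, h3⟩ | ⟨h1, h2, h3⟩)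
      · exact Or.inr (Or.inr (Or.inl ⟨m, hm, by omega, by omega⟩))
      · exact Or.inl ⟨m, (r - 1) / 2, hm, by omega, by omega, by omega⟩
      · exact Or.inr (Or.inl ⟨m, (r - 2) / 2, hm, by omega, by omega, by omega⟩)
  unfold eps
  by_cases h : (r = 2 * m + 1 ∧ (j = 2 * m + 1 ∨ j = 2 * m + 2)) ∨
      (r < 2 * m + 1 ∧ r % 2 = 1 ∧ (j = r ∨ j = 2 * m + 1)) ∨
      (r < 2 * m + 1 ∧ r % 2 = 0 ∧ (j = r ∨ j = 2 * m + 2))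
  · rw [if_pos (hiff.mpr h), if_pos h]
  · rw [if_neg (fun hh => h (hiff.mp hh)), if_neg h]

/-- the values of the cumulative sums `Ssum` on block `m`. -/
lemma S_char (k' g d' : ℕ) : ∀ i m r, m < k' → 1 ≤ r → r ≤ 2 * m + 1 → i = m ^ 2 + r →
    (∀ j, j % 2 = 1 → j < 2 * m → Ssum k' g d' i j = m + (if j < r then 1 else 0)) ∧
    Ssum k' g d' i (2 * m + 1) = r / 2 ∧
    (∀ j, j % 2 = 0 → 1 ≤ j → j ≤ 2 * m → Ssum k' g d' i j = m + (if j < r then 1 else 0)) ∧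
    Ssum k' g d' i (2 * m + 2) = (r - 1) / 2 ∧
    (∀ j, 2 * m + 2 < j → Ssum k' g d' i j = 0) := by
  intro i
  induction i using Nat.strong_induction_on with
  | _ i IH =>
    intro m r hm hr1 hr2 hi
    rcases Nat.eq_zero_or_pos m with hm0 | hm0
    · -- m = 0, so r = 1 and i = 1
      subst hm0
      have : r = 1 := by omega
      subst this
      have : i = 1 := by simpa using hi
      subst this
      refine ⟨by omega, ?_, by omega, ?_, ?_⟩ <;> simp [Ssum_one]
    · -- m ≥ 1
      have hsq : 0 < m ^ 2 := Nat.pow_pos (n := 2) hm0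
      rcases Nat.lt_or_ge 1 r with hr | hr
      · -- r ≥ 2 : predecessor is (m, r-1) in the same block
        have hi' : i = (m ^ 2 + (r - 1)) + 1 := by omega
        have hIH := IH (m ^ 2 + (r - 1)) (by omega) m (r - 1) hm (by omega) (by omega) rfl
        obtain ⟨A, B, C, D, E⟩ := hIH
        have heps := fun j => eps_char k' g d' m (r - 1) j hm (by omega) (by omega)
        have hS : ∀ j, Ssum k' g d' i j =
            Ssum k' g d' (m ^ 2 + (r - 1)) j + eps k' g d' (m ^ 2 + (r - 1)) j := by
          intro j; rw [hi']; exact Ssum_succ _ _ _ _ _ (by omega)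
        refine ⟨?_, ?_, ?_, ?_, ?_⟩
        · intro j hj1 hj2
          rw [hS j, A j hj1 hj2, heps j]
          split_ifs <;> omega
        · rw [hS _, B, heps _]
          split_ifs <;> omega
        · intro j hj1 hj2 hj3
          rw [hS j, C j hj1 hj2 hj3, heps j]
          split_ifs <;> omega
        · rw [hS _, D, heps _]
          split_ifs <;> omega
        · intro j hj
          rw [hS j, E j hj, heps j]
          split_ifs <;> omega
      · -- r = 1 : predecessor is (m-1, 2m-1), the last element of the previous block
        have hr1' : r = 1 := by omega
        subst hr1'
        have hpred : m ^ 2 = (m - 1) ^ 2 + (2 * m - 1) := by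
          obtain ⟨n, rfl⟩ : ∃ n, m = n + 1 := ⟨m - 1, by omega⟩
          have e : (n + 1) ^ 2 = n ^ 2 + 2 * n + 1 := by ring
          simp only [Nat.add_sub_cancel]
          omega
        have hi' : i = ((m - 1) ^ 2 + (2 * m - 1)) + 1 := by omega
        have hIH := IH ((m - 1) ^ 2 + (2 * m - 1)) (by omega) (m - 1) (2 * m - 1)
          (by omega) (by omega) (by omega) rfl
        obtain ⟨A, B, C, D, E⟩ := hIH
        have heps := fun j => eps_char k' g d' (m - 1) (2 * m - 1) j (by omega) (by omega)
          (by omega)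
        have hS : ∀ j, Ssum k' g d' i j =
            Ssum k' g d' ((m - 1) ^ 2 + (2 * m - 1)) j
              + eps k' g d' ((m - 1) ^ 2 + (2 * m - 1)) j := by
          intro j; rw [hi']; exact Ssum_succ _ _ _ _ _ (by omega)
        refine ⟨?_, ?_, ?_, ?_, ?_⟩
        · intro j hj1 hj2
          rw [hS j, heps j]
          rcases Nat.lt_or_ge j (2 * (m - 1)) with hc | hc
          · rw [A j hj1 hc]; split_ifs <;> omega
          · -- j odd, 2(m-1) ≤ j < 2m  ⇒  j = 2m-1 = 2(m-1)+1
            have hj' : j = 2 * (m - 1) + 1 := by omega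
            rw [hj', B]; split_ifs <;> omega
        · rw [hS _, heps _, E (2 * m + 1) (by omega)]
          split_ifs <;> omega
        · intro j hj1 hj2 hj3
          rw [hS j, heps j]
          rcases Nat.lt_or_ge j (2 * (m - 1) + 1) with hc | hc
          · rw [C j hj1 hj2 (by omega)]; split_ifs <;> omega
          · -- j even, 2(m-1)+1 ≤ j ≤ 2m  ⇒  j = 2m = 2(m-1)+2
            have hj' : j = 2 * (m - 1) + 2 := by omega
            rw [hj', D]; split_ifs <;> omega
        · rw [hS _, heps _, E (2 * m + 2) (by omega)]
          split_ifs <;> omega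
        · intro j hj
          rw [hS j, heps j, E j (by omega)]
          split_ifs <;> omega

/-- for `1 ≤ i ≤ (k')²`, if `j₁ < j₂` are the two indices with
`ε^i_{j₁} = ε^i_{j₂} = 1`, then `a^i_{j₁} + a^i_{j₂} = 2(i-1)`. -/
theorem stmt11 (k' g d' : ℕ) (hk' : 0 < k') :
    ∀ i j₁ j₂, 1 ≤ i → i ≤ k' ^ 2 → j₁ < j₂ →
      eps k' g d' i j₁ = 1 → eps k' g d' i j₂ = 1 →
      aseq k' g d' i j₁ + aseq k' g d' i j₂ = 2 * (i - 1) := by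
  intro i j₁ j₂ hi1 hi2 hj hε1 hε2
  obtain ⟨m, hm1, hm2⟩ : ∃ m, m ^ 2 ≤ i - 1 ∧ i - 1 < (m + 1) ^ 2 :=
    ⟨Nat.sqrt (i - 1), Nat.sqrt_le' _, Nat.lt_succ_sqrt' _⟩
  have esq : (m + 1) ^ 2 = m ^ 2 + 2 * m + 1 := by ring
  have hmm : m ≤ m ^ 2 := Nat.le_self_pow (by norm_num) m
  have hmk : m < k' := by
    have : ¬ (k' ≤ m) := by
      intro h
      have := Nat.pow_le_pow_left h 2
      omega
    omega
  obtain ⟨r, hi, hr1, hr2⟩ : ∃ r, i = m ^ 2 + r ∧ 1 ≤ r ∧ r ≤ 2 * m + 1 :=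
    ⟨i - m ^ 2, by omega, by omega, by omega⟩
  have hc1 := eps_char k' g d' m r j₁ hmk hr1 hr2
  have hc2 := eps_char k' g d' m r j₂ hmk hr1 hr2
  rw [← hi] at hc1 hc2
  rw [hc1] at hε1
  rw [hc2] at hε2
  have Q1 : (r = 2 * m + 1 ∧ (j₁ = 2 * m + 1 ∨ j₁ = 2 * m + 2)) ∨
      (r < 2 * m + 1 ∧ r % 2 = 1 ∧ (j₁ = r ∨ j₁ = 2 * m + 1)) ∨
      (r < 2 * m + 1 ∧ r % 2 = 0 ∧ (j₁ = r ∨ j₁ = 2 * m + 2)) := by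
    by_contra h; rw [if_neg h] at hε1; omega
  have Q2 : (r = 2 * m + 1 ∧ (j₂ = 2 * m + 1 ∨ j₂ = 2 * m + 2)) ∨
      (r < 2 * m + 1 ∧ r % 2 = 1 ∧ (j₂ = r ∨ j₂ = 2 * m + 1)) ∨
      (r < 2 * m + 1 ∧ r % 2 = 0 ∧ (j₂ = r ∨ j₂ = 2 * m + 2)) := by
    by_contra h; rw [if_neg h] at hε2; omega
  obtain ⟨A, B, C, D, E⟩ := S_char k' g d' i m r hmk hr1 hr2 hi
  obtain ⟨a1, s1⟩ := aseq_eq k' g d' (i - 1) j₁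
  obtain ⟨a2, s2⟩ := aseq_eq k' g d' (i - 1) j₂
  have hii : i - 1 + 1 = i := by omega
  rw [hii] at a1 s1 a2 s2
  rcases Q1 with ⟨h1, hj1⟩ | ⟨h1, hpar, hj1⟩ | ⟨h1, hpar, hj1⟩
  · -- r = 2m+1 : j₁ = 2m+1, j₂ = 2m+2
    have hj1' : j₁ = 2 * m + 1 := by
      rcases Q2 with ⟨_, hj2⟩ | ⟨h2, _, _⟩ | ⟨h2, _, _⟩ <;> omega
    have hj2' : j₂ = 2 * m + 2 := by
      rcases Q2 with ⟨_, hj2⟩ | ⟨h2, _, _⟩ | ⟨h2, _, _⟩ <;> omega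
    rw [hj1'] at a1 s1
    rw [hj2'] at a2 s2
    rw [hj1', hj2', a1, a2, B, D]
    omega
  · -- r odd, r < 2m+1 : j₁ = r, j₂ = 2m+1
    have hj2' : j₂ = 2 * m + 1 := by
      rcases Q2 with ⟨h2, _⟩ | ⟨_, _, hj2⟩ | ⟨_, hp2, _⟩ <;> omega
    have hj1' : j₁ = r := by omega
    rw [hj1'] at a1 s1
    rw [hj2'] at a2 s2
    have hS1 : Ssum k' g d' i r = m := by
      rw [A r hpar (by omega)]; split_ifs <;> omega
    rw [hj1', hj2', a1, a2, hS1, B]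
    omega
  · -- r even, r < 2m+1 : j₁ = r, j₂ = 2m+2
    have hj2' : j₂ = 2 * m + 2 := by
      rcases Q2 with ⟨h2, _⟩ | ⟨_, hp2, _⟩ | ⟨_, _, hj2⟩ <;> omega
    have hj1' : j₁ = r := by omega
    rw [hj1'] at a1 s1
    rw [hj2'] at a2 s2
    have hS1 : Ssum k' g d' i r = m := by
      rw [C r hpar (by omega) (by omega)]; split_ifs <;> omega
    rw [hj1', hj2', a1, a2, hS1, D]
    omega
end
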